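/- arXiv:2408.13791 — 2 statements merged into one kernel-verified Lean document; each statement's English description precedes it below -/
import Mathlib

section
/- Suppose f ∈ W^{1,2}(O;ℝ²) satisfies the trace inequality ‖f‖²_{L²(∂O)} ≤ c‖f‖_{L²}‖f‖_{W^{1,2}} and suppose α, κ ∈ C(∂O;ℝ) with α ≥ κ pointwise. If on a dense subspace V the identity ‖f‖²_{A^{1/2}} = ‖f‖₁² + ⟨(α−κ)f, f⟩_{L²(∂O)} holds, where ‖f‖₁ is the homogeneous H¹ seminorm, then there exist constants c₁, c₂ > 0 with c₁‖f‖₁² ≤ ‖f‖²_{A^{1/2}} ≤ c₂‖f‖₁² for all f ∈ V; i.e. the A^{1/2}-norm and the homogeneous W^{1,2} norm are equivalent on V. -/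
/-!
The Green identity writes `‖f‖²_{A^{1/2}}` as `‖f‖₁²` plus the boundary term
`∫ (α − κ) ‖tr f‖²`. Since `α ≥ κ` this term is nonnegative, giving the lower bound with
`c₁ = 1`. Since `α − κ` is bounded it is at most a multiple of `‖tr f‖²_{L²(∂O)}`, which the
trace inequality followed by Poincaré bounds by a multiple of `‖f‖₁²`.
-/

open MeasureTheory

theorem integral_mul_le_mul_integral_of_le {B : Type*} [MeasurableSpace B] {ν : Measure B}
    {w g : B → ℝ} {M : ℝ} (hw0 : ∀ b, 0 ≤ w b) (hwM : ∀ b, w b ≤ M) (hg0 : ∀ b, 0 ≤ g b)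
    (hg : Integrable g ν) :
    ∫ b, w b * g b ∂ν ≤ M * ∫ b, g b ∂ν := by
  rw [← integral_const_mul]
  exact integral_mono_of_nonneg (.of_forall fun b => mul_nonneg (hw0 b) (hg0 b))
    (hg.const_mul M) (.of_forall fun b => mul_le_mul_of_nonneg_right (hwM b) (hg0 b))

theorem mul_le_sq_of_le_of_le {a c b : ℝ} (ha : a ≤ b) (hc : c ≤ b) (hc0 : 0 ≤ c) :
    a * c ≤ b ^ 2 :=
  calc a * c ≤ b * c := mul_le_mul_of_nonneg_right ha hc0
    _ ≤ b * b := mul_le_mul_of_nonneg_left hc (hc0.trans hc)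
    _ = b ^ 2 := (sq b).symm

theorem stmt7_general {X : Type*} [AddCommGroup X] [Module ℝ X]
    {E : Type*} [NormedAddCommGroup E] [InnerProductSpace ℝ E]
    {B : Type*} [MeasurableSpace B] (ν : Measure B)
    (V : Submodule ℝ X)
    -- the L², full W^{1,2}, homogeneous W^{1,2} (‖·‖₁) and A^{1/2} norms
    (normL2 normW12 norm1 normA : X → ℝ)
    -- the boundary trace of a field
    (tr : X → B → E)
    -- friction coefficient and curvature on the boundary
    (α κ : B → ℝ)
    (hnW12 : ∀ f, 0 ≤ normW12 f)
    -- α ≥ κ pointwise, with α − κ bounded (continuous on the compact boundary)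
    (hακ : ∀ b, κ b ≤ α b)
    (hbdd : ∃ M, ∀ b, α b - κ b ≤ M)
    (hInt : ∀ f ∈ V, Integrable (fun b => ‖tr f b‖ ^ 2) ν)
    -- interpolation trace inequality ‖f‖²_{L²(∂O)} ≤ c ‖f‖_{L²} ‖f‖_{W^{1,2}}
    (htr : ∃ c : ℝ, 0 ≤ c ∧ ∀ f ∈ V,
      (∫ b, ‖tr f b‖ ^ 2 ∂ν) ≤ c * normL2 f * normW12 f)
    -- the Green-type identity ‖f‖²_{A^{1/2}} = ‖f‖₁² + ⟨(α−κ)f, f⟩_{L²(∂O)} on V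
    (hid : ∀ f ∈ V,
      normA f ^ 2 = norm1 f ^ 2 + ∫ b, (α b - κ b) * ‖tr f b‖ ^ 2 ∂ν)
    -- Poincaré: the L² and full W^{1,2} norms are controlled by ‖·‖₁ on V
    (hPoin : ∃ cP : ℝ, 0 ≤ cP ∧ ∀ f ∈ V,
      normL2 f ≤ cP * norm1 f ∧ normW12 f ≤ cP * norm1 f) :
    ∃ c₁ c₂ : ℝ, 0 < c₁ ∧ 0 < c₂ ∧ ∀ f ∈ V,
      c₁ * norm1 f ^ 2 ≤ normA f ^ 2 ∧ normA f ^ 2 ≤ c₂ * norm1 f ^ 2 := by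
  obtain ⟨M, hM⟩ := hbdd
  obtain ⟨c, hc0, htr⟩ := htr
  obtain ⟨cP, hcP0, hPoin⟩ := hPoin
  have hM0 : 0 ≤ max M 0 := le_max_right M 0
  have hK0 : 0 ≤ max M 0 * (c * cP ^ 2) := by positivity
  refine ⟨1, 1 + max M 0 * (c * cP ^ 2), one_pos, by linarith, fun f hf => ?_⟩
  have hακ0 : ∀ b, 0 ≤ α b - κ b := fun b => sub_nonneg.mpr (hακ b)
  have hboundary_nonneg : 0 ≤ ∫ b, (α b - κ b) * ‖tr f b‖ ^ 2 ∂ν :=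
    integral_nonneg fun b => mul_nonneg (hακ0 b) (sq_nonneg _)
  have htrace : ∫ b, ‖tr f b‖ ^ 2 ∂ν ≤ c * cP ^ 2 * norm1 f ^ 2 := by
    obtain ⟨hL2, hW12⟩ := hPoin f hf
    calc ∫ b, ‖tr f b‖ ^ 2 ∂ν ≤ c * (normL2 f * normW12 f) := by
          rw [← mul_assoc]; exact htr f hf
      _ ≤ c * (cP * norm1 f) ^ 2 :=
        mul_le_mul_of_nonneg_left (mul_le_sq_of_le_of_le hL2 hW12 (hnW12 f)) hc0
      _ = c * cP ^ 2 * norm1 f ^ 2 := by ring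
  have hboundary_le : ∫ b, (α b - κ b) * ‖tr f b‖ ^ 2 ∂ν ≤
      max M 0 * (c * cP ^ 2 * norm1 f ^ 2) :=
    (integral_mul_le_mul_integral_of_le hακ0 (fun b => (hM b).trans (le_max_left M 0))
      (fun b => sq_nonneg _) (hInt f hf)).trans (mul_le_mul_of_nonneg_left htrace hM0)
  rw [hid f hf]
  constructor <;> linarith

/-- Equivalence of the `A^{1/2}` norm with the homogeneous `W^{1,2}` norm on a dense
subspace `V`, given the Green-type identity, `α ≥ κ`, the interpolation trace
inequality, and the Poincaré-type equivalences. -/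
theorem stmt7 {X : Type*} [AddCommGroup X] [Module ℝ X]
    {E : Type*} [NormedAddCommGroup E] [InnerProductSpace ℝ E]
    {B : Type*} [MeasurableSpace B] (ν : Measure B)
    (V : Submodule ℝ X)
    -- the L², full W^{1,2}, homogeneous W^{1,2} (‖·‖₁) and A^{1/2} norms
    (normL2 normW12 norm1 normA : X → ℝ)
    -- the boundary trace of a field
    (tr : X → B → E)
    -- friction coefficient and curvature on the boundary
    (α κ : B → ℝ)
    (hn1 : ∀ f, 0 ≤ norm1 f)
    (hnL2 : ∀ f, 0 ≤ normL2 f)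
    (hnW12 : ∀ f, 0 ≤ normW12 f)
    -- α ≥ κ pointwise, with α − κ bounded (continuous on the compact boundary)
    (hακ : ∀ b, κ b ≤ α b)
    (hbdd : ∃ M, ∀ b, α b - κ b ≤ M)
    (hInt : ∀ f ∈ V, Integrable (fun b => ‖tr f b‖ ^ 2) ν)
    -- interpolation trace inequality ‖f‖²_{L²(∂O)} ≤ c ‖f‖_{L²} ‖f‖_{W^{1,2}}
    (htr : ∃ c : ℝ, 0 ≤ c ∧ ∀ f ∈ V,
      (∫ b, ‖tr f b‖ ^ 2 ∂ν) ≤ c * normL2 f * normW12 f)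
    -- the Green-type identity ‖f‖²_{A^{1/2}} = ‖f‖₁² + ⟨(α−κ)f, f⟩_{L²(∂O)} on V
    (hid : ∀ f ∈ V,
      normA f ^ 2 = norm1 f ^ 2 + ∫ b, (α b - κ b) * ‖tr f b‖ ^ 2 ∂ν)
    -- Poincaré: the L² and full W^{1,2} norms are controlled by ‖·‖₁ on V
    (hPoin : ∃ cP : ℝ, 0 ≤ cP ∧ ∀ f ∈ V,
      normL2 f ≤ cP * norm1 f ∧ normW12 f ≤ cP * norm1 f) :
    ∃ c₁ c₂ : ℝ, 0 < c₁ ∧ 0 < c₂ ∧ ∀ f ∈ V,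
      c₁ * norm1 f ^ 2 ≤ normA f ^ 2 ∧ normA f ^ 2 ≤ c₂ * norm1 f ^ 2 :=
  stmt7_general ν V normL2 normW12 norm1 normA tr α κ hnW12 hακ hbdd hInt htr hid hPoin
end

section
/- Let ξ ∈ W^{2,∞}(O;ℝ²) be divergence-free and f ∈ W^{2,2}(O;ℝ²). Define B f := L_ξ f + T_ξ f where L_ξ f = Σ_j ξ^j ∂_j f and (T_ξ f) := Σ_j f^j ∇ξ^j. Then curl(B f) = L_ξ(curl f) in L²(O;ℝ), i.e. the SALT operator acts on vorticity as pure transport. -/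
/-!
Componentwise, `(B f)ⁱ = Σⱼ (ξʲ ∂ⱼ fⁱ + fʲ ∂ᵢ ξʲ)`. Differentiating and taking the curl, the
second derivatives of `ξ` cancel and the transport terms `ξʲ ∂ⱼ` pass through the curl, both by
symmetry of mixed partials; the remaining first-order products collapse to `(div ξ) · curl f`.
Hence `curl (B f) = L_ξ (curl f) + (div ξ) curl f` at every point where `ξ` and `f` are `C²`,
and the last term vanishes for divergence-free `ξ`.
-/

open MeasureTheory

noncomputable section

abbrev E2 : Type := EuclideanSpace ℝ (Fin 2)

/-- The `j`-th partial derivative of a vector field. -/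
def pd (j : Fin 2) (f : E2 → E2) (x : E2) : E2 :=
  fderiv ℝ f x (EuclideanSpace.single j 1)

/-- The transport term `L_ξ f = Σ_j ξ^j ∂_j f`. -/
def Ladv (ξ f : E2 → E2) (x : E2) : E2 :=
  ∑ j : Fin 2, (ξ x j) • pd j f x

/-- The transport operator on scalar fields: `L_ξ h = Σ_j ξ^j ∂_j h`. -/
def LadvS (ξ : E2 → E2) (h : E2 → ℝ) (x : E2) : ℝ :=
  ∑ j : Fin 2, (ξ x j) * fderiv ℝ h x (EuclideanSpace.single j 1)

/-- The stretching term `T_ξ f = Σ_j f^j ∇ξ^j`. -/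
def Tstr (ξ f : E2 → E2) (x : E2) : E2 :=
  ∑ j : Fin 2, (f x j) • gradient (fun y => ξ y j) x

/-- The SALT operator `B f = L_ξ f + T_ξ f`. -/
def Bop (ξ f : E2 → E2) (x : E2) : E2 := Ladv ξ f x + Tstr ξ f x

/-- The scalar curl of a 2D vector field. -/
def curl2 (f : E2 → E2) (x : E2) : ℝ :=
  (pd 0 f x) 1 - (pd 1 f x) 0

open Filter Topology

section Euclidean

variable {ι H : Type*} [Fintype ι] [NormedAddCommGroup H] [NormedSpace ℝ H]

theorem fderiv_euclidean_apply {g : H → EuclideanSpace ℝ ι} {x : H}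
    (hg : DifferentiableAt ℝ g x) (v : H) (i : ι) :
    fderiv ℝ g x v i = fderiv ℝ (fun y => g y i) x v := by
  have h := ((EuclideanSpace.proj (𝕜 := ℝ) i).hasFDerivAt.comp x hg.hasFDerivAt).fderiv
  exact (congrArg (fun L : H →L[ℝ] ℝ => L v) h).symm

theorem gradient_euclidean_apply [DecidableEq ι] (h : EuclideanSpace ℝ ι → ℝ)
    (x : EuclideanSpace ℝ ι) (i : ι) :
    gradient h x i = fderiv ℝ h x (EuclideanSpace.single i 1) := by
  rw [← inner_gradient_left, EuclideanSpace.inner_single_right]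
  simp

end Euclidean

def partialDeriv (k : Fin 2) (h : E2 → ℝ) (x : E2) : ℝ :=
  fderiv ℝ h x (EuclideanSpace.single k 1)

section PartialDeriv

variable {g : E2 → E2} {h u v : E2 → ℝ} {x : E2}

theorem pd_apply (hg : DifferentiableAt ℝ g x) (k i : Fin 2) :
    pd k g x i = partialDeriv k (fun y => g y i) x :=
  fderiv_euclidean_apply hg _ i

theorem gradient_apply_eq_partialDeriv (h : E2 → ℝ) (x : E2) (i : Fin 2) :
    gradient h x i = partialDeriv i h x :=
  gradient_euclidean_apply h x i

theorem curl2_eq (hg : DifferentiableAt ℝ g x) :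
    curl2 g x = partialDeriv 0 (fun y => g y 1) x - partialDeriv 1 (fun y => g y 0) x := by
  rw [curl2, pd_apply hg, pd_apply hg]

theorem Filter.EventuallyEq.partialDeriv_eq (huv : u =ᶠ[𝓝 x] v) (k : Fin 2) :
    partialDeriv k u x = partialDeriv k v x := by
  rw [partialDeriv, partialDeriv, huv.fderiv_eq]

theorem partialDeriv_add (hu : DifferentiableAt ℝ u x) (hv : DifferentiableAt ℝ v x) (k : Fin 2) :
    partialDeriv k (fun y => u y + v y) x = partialDeriv k u x + partialDeriv k v x := by
  simp only [partialDeriv, fderiv_fun_add hu hv, add_apply]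

theorem partialDeriv_sub (hu : DifferentiableAt ℝ u x) (hv : DifferentiableAt ℝ v x) (k : Fin 2) :
    partialDeriv k (fun y => u y - v y) x = partialDeriv k u x - partialDeriv k v x := by
  simp only [partialDeriv, fderiv_fun_sub hu hv, sub_apply]

theorem partialDeriv_mul (hu : DifferentiableAt ℝ u x) (hv : DifferentiableAt ℝ v x) (k : Fin 2) :
    partialDeriv k (fun y => u y * v y) x
      = partialDeriv k u x * v x + u x * partialDeriv k v x := by
  simp only [partialDeriv, fderiv_fun_mul hu hv, add_apply, smul_apply, smul_eq_mul]
  ring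

theorem partialDeriv_sum {ι : Type*} {s : Finset ι} {u : ι → E2 → ℝ}
    (hu : ∀ j ∈ s, DifferentiableAt ℝ (u j) x) (k : Fin 2) :
    partialDeriv k (fun y => ∑ j ∈ s, u j y) x = ∑ j ∈ s, partialDeriv k (u j) x := by
  simp only [partialDeriv, fderiv_fun_sum hu, FunLike.coe_sum, Finset.sum_apply]

theorem ContDiffAt.hasFDerivAt_partialDeriv (hh : ContDiffAt ℝ 2 h x) (k : Fin 2) :
    HasFDerivAt (partialDeriv k h)
      ((ContinuousLinearMap.apply ℝ ℝ (EuclideanSpace.single k 1)).comp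
        (fderiv ℝ (fderiv ℝ h) x)) x :=
  (ContinuousLinearMap.apply ℝ ℝ (EuclideanSpace.single k (1 : ℝ))).hasFDerivAt.comp x
    ((hh.fderiv_right (m := 1) (by norm_num)).differentiableAt one_ne_zero).hasFDerivAt

theorem ContDiffAt.differentiableAt_partialDeriv (hh : ContDiffAt ℝ 2 h x) (k : Fin 2) :
    DifferentiableAt ℝ (partialDeriv k h) x :=
  (hh.hasFDerivAt_partialDeriv k).differentiableAt

theorem ContDiffAt.partialDeriv_comm (hh : ContDiffAt ℝ 2 h x) (k l : Fin 2) :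
    partialDeriv k (partialDeriv l h) x = partialDeriv l (partialDeriv k h) x := by
  rw [partialDeriv, partialDeriv, (hh.hasFDerivAt_partialDeriv l).fderiv,
    (hh.hasFDerivAt_partialDeriv k).fderiv]
  exact hh.isSymmSndFDerivAt (by simp) _ _

end PartialDeriv

theorem LadvS_eq (ξ : E2 → E2) (h : E2 → ℝ) (x : E2) :
    LadvS ξ h x = ∑ j : Fin 2, ξ x j * partialDeriv j h x :=
  rfl

section SALT

variable {ξ f : E2 → E2} {x : E2}

def bopComponent (ξ f : E2 → E2) (i : Fin 2) : E2 → ℝ := fun y =>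
  ∑ j : Fin 2, (ξ y j * partialDeriv j (fun z => f z i) y + f y j * partialDeriv i (fun z => ξ z j) y)

theorem Bop_apply {y : E2} (hf : DifferentiableAt ℝ f y) (i : Fin 2) :
    Bop ξ f y i = bopComponent ξ f i y := by
  simp only [Bop, Ladv, Tstr, bopComponent, PiLp.add_apply, WithLp.ofLp_sum, WithLp.ofLp_smul,
    Finset.sum_apply, Pi.smul_apply, smul_eq_mul, pd_apply hf, gradient_apply_eq_partialDeriv,
    Finset.sum_add_distrib]

theorem Bop_apply_eventuallyEq (hf : ContDiffAt ℝ 1 f x) (i : Fin 2) :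
    (fun y => Bop ξ f y i) =ᶠ[𝓝 x] bopComponent ξ f i := by
  filter_upwards [hf.eventually (by simp)] with y hy
  exact Bop_apply (hy.differentiableAt (by simp)) i

theorem differentiableAt_bopComponent (hξ : ContDiffAt ℝ 2 ξ x) (hf : ContDiffAt ℝ 2 f x)
    (i : Fin 2) : DifferentiableAt ℝ (bopComponent ξ f i) x := by
  have hξc := contDiffAt_euclidean.1 hξ
  have hfc := contDiffAt_euclidean.1 hf
  unfold bopComponent
  exact DifferentiableAt.fun_sum fun j _ =>
    (((hξc j).differentiableAt (by simp)).mul ((hfc i).differentiableAt_partialDeriv j)).add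
      (((hfc j).differentiableAt (by simp)).mul ((hξc j).differentiableAt_partialDeriv i))

theorem partialDeriv_bopComponent (hξ : ContDiffAt ℝ 2 ξ x) (hf : ContDiffAt ℝ 2 f x)
    (k i : Fin 2) :
    partialDeriv k (bopComponent ξ f i) x = ∑ j : Fin 2,
      (partialDeriv k (fun y => ξ y j) x * partialDeriv j (fun y => f y i) x
        + ξ x j * partialDeriv k (partialDeriv j (fun y => f y i)) x
        + (partialDeriv k (fun y => f y j) x * partialDeriv i (fun y => ξ y j) x
          + f x j * partialDeriv k (partialDeriv i (fun y => ξ y j)) x)) := by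
  have hξc := contDiffAt_euclidean.1 hξ
  have hfc := contDiffAt_euclidean.1 hf
  have hdξ : ∀ j, DifferentiableAt ℝ (fun y => ξ y j) x := fun j =>
    (hξc j).differentiableAt (by simp)
  have hdf : ∀ j, DifferentiableAt ℝ (fun y => f y j) x := fun j =>
    (hfc j).differentiableAt (by simp)
  have hL : ∀ j, DifferentiableAt ℝ (fun y => ξ y j * partialDeriv j (fun z => f z i) y) x :=
    fun j => (hdξ j).mul ((hfc i).differentiableAt_partialDeriv j)
  have hT : ∀ j, DifferentiableAt ℝ (fun y => f y j * partialDeriv i (fun z => ξ z j) y) x :=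
    fun j => (hdf j).mul ((hξc j).differentiableAt_partialDeriv i)
  unfold bopComponent
  rw [partialDeriv_sum (u := fun j y => ξ y j * partialDeriv j (fun z => f z i) y
    + f y j * partialDeriv i (fun z => ξ z j) y) fun j _ => (hL j).add (hT j)]
  refine Finset.sum_congr rfl fun j _ => ?_
  rw [partialDeriv_add (hL j) (hT j),
    partialDeriv_mul (hdξ j) ((hfc i).differentiableAt_partialDeriv j),
    partialDeriv_mul (hdf j) ((hξc j).differentiableAt_partialDeriv i)]

theorem curl2_Bop (hξ : ContDiffAt ℝ 2 ξ x) (hf : ContDiffAt ℝ 2 f x) :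
    curl2 (Bop ξ f) x
      = partialDeriv 0 (bopComponent ξ f 1) x - partialDeriv 1 (bopComponent ξ f 0) x := by
  have hB := fun i => Bop_apply_eventuallyEq (ξ := ξ) (hf.of_le one_le_two) i
  have hd : DifferentiableAt ℝ (Bop ξ f) x := differentiableAt_euclidean.2 fun i =>
    (hB i).differentiableAt_iff.2 (differentiableAt_bopComponent hξ hf i)
  rw [curl2_eq hd, (hB 1).partialDeriv_eq, (hB 0).partialDeriv_eq]

theorem partialDeriv_curl2 (hf : ContDiffAt ℝ 2 f x) (k : Fin 2) :
    partialDeriv k (curl2 f) x = partialDeriv k (partialDeriv 0 (fun y => f y 1)) x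
      - partialDeriv k (partialDeriv 1 (fun y => f y 0)) x := by
  have hfc := contDiffAt_euclidean.1 hf
  have hcurl : curl2 f =ᶠ[𝓝 x]
      fun y => partialDeriv 0 (fun z => f z 1) y - partialDeriv 1 (fun z => f z 0) y := by
    filter_upwards [hf.eventually (by simp)] with y hy
    exact curl2_eq (hy.differentiableAt (by simp))
  rw [hcurl.partialDeriv_eq, partialDeriv_sub ((hfc 1).differentiableAt_partialDeriv 0)
    ((hfc 0).differentiableAt_partialDeriv 1)]

theorem curl2_Bop_eq (hξ : ContDiffAt ℝ 2 ξ x) (hf : ContDiffAt ℝ 2 f x) :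
    curl2 (Bop ξ f) x = LadvS ξ (curl2 f) x + (∑ j : Fin 2, pd j ξ x j) * curl2 f x := by
  have hξc := contDiffAt_euclidean.1 hξ
  have hfc := contDiffAt_euclidean.1 hf
  rw [curl2_Bop hξ hf, partialDeriv_bopComponent hξ hf, partialDeriv_bopComponent hξ hf,
    LadvS_eq, curl2_eq (hf.differentiableAt (by simp))]
  simp only [Fin.sum_univ_two]
  rw [partialDeriv_curl2 hf, partialDeriv_curl2 hf, pd_apply (hξ.differentiableAt (by simp)),
    pd_apply (hξ.differentiableAt (by simp))]
  linear_combination ξ x 0 * (hfc 0).partialDeriv_comm 0 1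
    - ξ x 1 * (hfc 1).partialDeriv_comm 1 0
    + f x 0 * (hξc 0).partialDeriv_comm 0 1 + f x 1 * (hξc 1).partialDeriv_comm 0 1

end SALT

theorem stmt11_general (O : Set E2) (hO : IsOpen O)
    (ξ f : E2 → E2)
    (hξ : ContDiff ℝ 2 ξ)
    (hdivξ : ∀ x ∈ O, ∑ j : Fin 2, pd j ξ x j = 0)
    (hf : ContDiffOn ℝ 2 f O) :
    ∀ x ∈ O, curl2 (Bop ξ f) x = LadvS ξ (curl2 f) x := by
  intro x hx
  rw [curl2_Bop_eq hξ.contDiffAt (hf.contDiffAt (hO.mem_nhds hx)), hdivξ x hx, zero_mul, add_zero]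

/-- The SALT operator acts on vorticity as pure transport:
`curl (B f) = L_ξ (curl f)` for divergence-free `ξ ∈ W^{2,∞}` and `f ∈ W^{2,2}`. -/
theorem stmt11 (O : Set E2) (hO : IsOpen O) (hOb : Bornology.IsBounded O)
    (ξ f : E2 → E2)
    (hξ : ContDiff ℝ 2 ξ)
    (hξbdd : ∃ K : ℝ, ∀ i : ℕ, i ≤ 2 → ∀ x, ‖iteratedFDeriv ℝ i ξ x‖ ≤ K)
    (hdivξ : ∀ x ∈ O, ∑ j : Fin 2, pd j ξ x j = 0)
    (hf : ContDiffOn ℝ 2 f O)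
    (hf2 : ∀ i : ℕ, i ≤ 2 → IntegrableOn (fun x => ‖iteratedFDeriv ℝ i f x‖ ^ 2) O) :
    ∀ x ∈ O, curl2 (Bop ξ f) x = LadvS ξ (curl2 f) x :=
  stmt11_general O hO ξ f hξ hdivξ hf
end
end
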